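/- Let N be a square-free positive integer and let m be an integer with gcd(m, N) = 1. Then the second moment of Kloosterman sums satisfies ∑_{1 ≤ n ≤ N, gcd(n,N)=1} K(m, n, N)² ≥ N² / 2^{ω(N) + 1}. -/

import Mathlib

/-!
Opening the square and summing over `n` first turns `∑ₙ K(m,n,N)²` into
`∑_{x,y} e(m(x+y)/N) c_N(x̄ + ȳ)`, with `c_N(t) = ∑_{u ∈ (ℤ/N)ˣ} e(ut/N)` the Ramanujan
sum; substituting `x = zy` and using `c_N(ut) = c_N(t)` for units `u` gives `∑_z c_N(1+z)²`.
By the Chinese remainder theorem `c_{ab}` factors as `c_a · c_b`, so this moment is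
multiplicative in `N`; at a prime `c_p(t)` is `p - 1` or `-1`, so the moment is
`∏_{p ∣ N} (p² - p - 1)`. Finally `p² ≤ 2 (p² - p - 1)` for `p ≥ 3`, while `p = 2` costs the
one extra factor `2`.
-/

open scoped BigOperators

/-- The Kloosterman sum `K(a,b,c) = ∑_{x mod c, gcd(x,c)=1} e((a x + b x̄)/c)`,
where `x̄` is the inverse of `x` modulo `c`. -/
noncomputable def kloosterman (a b : ℤ) (c : ℕ) : ℂ :=
  ∑ x ∈ (Finset.range c).filter (fun x => Nat.gcd x c = 1),
    Complex.exp (2 * Real.pi * Complex.I *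
      (((a * (x : ℤ) + b * ((((x : ZMod c)⁻¹ : ZMod c)).val : ℤ) : ℤ) : ℂ) / (c : ℂ)))

open Finset ZMod

local notation "ψ" => ZMod.stdAddChar

lemma sum_units_eq_sum_sub_zero {F M : Type*} [GroupWithZero F] [Fintype F] [DecidableEq F]
    [AddCommGroup M] (f : F → M) : ∑ u : Fˣ, f u = ∑ x, f x - f 0 := by
  rw [Fintype.sum_eq_add_sum_subtype_ne f 0, add_sub_cancel_left]
  exact Fintype.sum_equiv unitsEquivNeZero _ _ fun _ => rfl

lemma sum_Icc_one_eq_sum_range {M : Type*} [AddCommGroup M] {N : ℕ} {g : ℕ → M}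
    (h : g N = g 0) : ∑ n ∈ Icc 1 N, g n = ∑ n ∈ range N, g n := by
  have := sum_range_succ' g N
  rw [sum_range_succ, h, add_left_inj] at this
  rw [this, range_eq_Ico, sum_Ico_add', zero_add, Ico_add_one_right_eq_Icc]

lemma sum_units_chineseRemainder {R : Type*} [CommSemiring R] {a b : ℕ} [NeZero a] [NeZero b]
    (hab : a.Coprime b) (f : ZMod a → R) (g : ZMod b → R) :
    ∑ z : (ZMod (a * b))ˣ, f (chineseRemainder hab z).1 * g (chineseRemainder hab z).2
      = (∑ x : (ZMod a)ˣ, f x) * ∑ y : (ZMod b)ˣ, g y := by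
  rw [sum_mul_sum, ← Fintype.sum_prod_type']
  exact Fintype.sum_equiv
    ((Units.mapEquiv (chineseRemainder hab).toMulEquiv).trans MulEquiv.prodUnits).toEquiv _ _
    fun _ => rfl

/-- `u = β` and `v = α`, where `a α + b β = 1`, since then `1 / (a b) = β / a + α / b`. -/
lemma exists_stdAddChar_eq_mul_of_coprime {a b : ℕ} [NeZero a] [NeZero b] (hab : a.Coprime b) :
    ∃ (u : (ZMod a)ˣ) (v : (ZMod b)ˣ), ∀ w : ZMod (a * b),
      ψ w = ψ ((u : ZMod a) * (chineseRemainder hab w).1)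
        * ψ ((v : ZMod b) * (chineseRemainder hab w).2) := by
  have hbezout : (1 : ℤ) = a * a.gcdA b + b * a.gcdB b := by
    rw [← Nat.gcd_eq_gcd_ab, hab.gcd_eq_one, Nat.cast_one]
  have hu : ((a.gcdB b : ℤ) : ZMod a) * b = 1 := by
    have := congrArg (Int.cast : ℤ → ZMod a) hbezout
    push_cast [ZMod.natCast_self] at this
    rw [this]; ring
  have hv : ((a.gcdA b : ℤ) : ZMod b) * a = 1 := by
    have := congrArg (Int.cast : ℤ → ZMod b) hbezout
    push_cast [ZMod.natCast_self] at this
    rw [this]; ring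
  refine ⟨Units.mkOfMulEqOne _ _ hu, Units.mkOfMulEqOne _ _ hv, fun w => ?_⟩
  obtain ⟨k, rfl⟩ := ZMod.intCast_surjective w
  simp only [map_intCast, Prod.fst_intCast, Prod.snd_intCast, Units.val_mkOfMulEqOne,
    ← Int.cast_mul, stdAddChar_coe, ← Complex.exp_add]
  congr 1
  have ha : (a : ℂ) ≠ 0 := Nat.cast_ne_zero.mpr (NeZero.ne a)
  have hb : (b : ℂ) ≠ 0 := Nat.cast_ne_zero.mpr (NeZero.ne b)
  have := congrArg (Int.cast : ℤ → ℂ) hbezout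
  push_cast at this ⊢
  field_simp
  linear_combination (k : ℂ) * this

noncomputable def ramanujanSum (N : ℕ) [NeZero N] (t : ZMod N) : ℂ :=
  ∑ u : (ZMod N)ˣ, ψ ((u : ZMod N) * t)

lemma ramanujanSum_units_mul {N : ℕ} [NeZero N] (v : (ZMod N)ˣ) (t : ZMod N) :
    ramanujanSum N (v * t) = ramanujanSum N t :=
  Fintype.sum_equiv (Equiv.mulRight v) _ _ fun u => by simp [mul_assoc]

lemma ramanujanSum_prime {p : ℕ} [Fact p.Prime] (t : ZMod p) :
    ramanujanSum p t = if t = 0 then (p : ℂ) - 1 else -1 := by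
  rw [ramanujanSum, sum_units_eq_sum_sub_zero (fun x => ψ (x * t)),
    AddChar.sum_mulShift t (isPrimitive_stdAddChar p), ZMod.card, zero_mul,
    AddChar.map_zero_eq_one]
  split_ifs <;> simp

lemma ramanujanSum_mul_of_coprime {a b : ℕ} [NeZero a] [NeZero b] (hab : a.Coprime b)
    (w : ZMod (a * b)) :
    ramanujanSum (a * b) w
      = ramanujanSum a (chineseRemainder hab w).1 * ramanujanSum b (chineseRemainder hab w).2 := by
  obtain ⟨u, v, hψ⟩ := exists_stdAddChar_eq_mul_of_coprime hab
  rw [← ramanujanSum_units_mul u, ← ramanujanSum_units_mul v, ramanujanSum, ramanujanSum,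
    ramanujanSum, ← sum_units_chineseRemainder hab
      (fun x => ψ (x * ((u : ZMod a) * (chineseRemainder hab w).1)))
      (fun y => ψ (y * ((v : ZMod b) * (chineseRemainder hab w).2)))]
  refine sum_congr rfl fun z _ => ?_
  simp only [hψ, map_mul, Prod.fst_mul, Prod.snd_mul]
  ring_nf

noncomputable def ramanujanMoment (N : ℕ) [NeZero N] : ℂ :=
  ∑ z : (ZMod N)ˣ, ramanujanSum N (1 + z) ^ 2

lemma ramanujanMoment_one : ramanujanMoment 1 = 1 := by
  simp [ramanujanMoment, ramanujanSum, Subsingleton.elim _ (0 : ZMod 1)]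

lemma ramanujanMoment_prime {p : ℕ} [Fact p.Prime] :
    ramanujanMoment p = (p : ℂ) ^ 2 - p - 1 := by
  have hcard : ((Fintype.card (ZMod p)ˣ : ℕ) : ℂ) = p - 1 := by
    rw [ZMod.card_units, Nat.cast_sub (Fact.out : p.Prime).one_le, Nat.cast_one]
  have hzero (z : (ZMod p)ˣ) : 1 + (z : ZMod p) = 0 ↔ z = -1 := by
    rw [← Units.val_inj, Units.val_neg, Units.val_one, add_eq_zero_iff_neg_eq]
    exact eq_comm
  have hsq (z : (ZMod p)ˣ) : (if z = -1 then (p : ℂ) - 1 else -1) ^ 2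
      = 1 + if z = -1 then ((p : ℂ) - 1) ^ 2 - 1 else 0 := by
    split_ifs <;> ring
  simp only [ramanujanMoment, ramanujanSum_prime, hzero, hsq, sum_add_distrib, sum_ite_eq',
    mem_univ, if_true, sum_const, card_univ, nsmul_eq_mul, mul_one, hcard]
  ring

lemma ramanujanMoment_mul_of_coprime {a b : ℕ} [NeZero a] [NeZero b] (hab : a.Coprime b) :
    ramanujanMoment (a * b) = ramanujanMoment a * ramanujanMoment b := by
  rw [ramanujanMoment, ramanujanMoment, ramanujanMoment,
    ← sum_units_chineseRemainder hab (fun x => ramanujanSum a (1 + x) ^ 2)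
      (fun y => ramanujanSum b (1 + y) ^ 2)]
  refine sum_congr rfl fun z _ => ?_
  rw [ramanujanSum_mul_of_coprime hab, mul_pow, map_add, map_one, Prod.fst_add, Prod.snd_add,
    Prod.fst_one, Prod.snd_one]

lemma ramanujanMoment_of_squarefree {N : ℕ} [NeZero N] (hN : Squarefree N) :
    ramanujanMoment N = ∏ p ∈ N.primeFactors, ((p : ℂ) ^ 2 - p - 1) := by
  revert hN ‹NeZero N›
  induction N using Nat.recOnPosPrimePosCoprime with
  | zero => intro h; exact absurd rfl h.out
  | one => simp [ramanujanMoment_one]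
  | prime_pow p n hp hn =>
    intro _ hN
    obtain rfl : n = 1 := ((Nat.squarefree_pow_iff hp.ne_one hn.ne').mp hN).2
    have : Fact p.Prime := ⟨hp⟩
    simp [ramanujanMoment_prime, hp.primeFactors]
  | coprime a b ha hb hab iha ihb =>
    intro _ hN
    have : NeZero a := ⟨by omega⟩
    have : NeZero b := ⟨by omega⟩
    rw [ramanujanMoment_mul_of_coprime hab, iha hN.of_mul_left, ihb hN.of_mul_right,
      Nat.primeFactors_mul (NeZero.ne a) (NeZero.ne b), prod_union hab.disjoint_primeFactors]

section Kloosterman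

variable {N : ℕ} [NeZero N]

noncomputable def kloostermanSum (a b : ZMod N) : ℂ :=
  ∑ x : (ZMod N)ˣ, ψ (a * (x : ZMod N) + b * (↑x⁻¹ : ZMod N))

lemma sum_range_filter_coprime_eq_sum_units {M : Type*} [AddCommMonoid M] (f : ZMod N → M) :
    ∑ n ∈ (range N).filter (fun n => n.gcd N = 1), f n = ∑ u : (ZMod N)ˣ, f u := by
  symm
  refine sum_bij' (fun u _ => (u : ZMod N).val)
    (fun n hn => ZMod.unitOfCoprime n (mem_filter.mp hn).2) (fun u _ => ?_)
    (fun _ _ => mem_univ _) (fun u _ => ?_) (fun n hn => ?_) (fun u _ => ?_)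
  · exact mem_filter.mpr ⟨mem_range.mpr (ZMod.val_lt _), ZMod.val_coe_unit_coprime u⟩
  · ext
    simp
  · simp [ZMod.val_natCast_of_lt (mem_range.mp (mem_filter.mp hn).1)]
  · simp

lemma sum_Icc_filter_coprime_eq_sum_units {M : Type*} [AddCommGroup M] (f : ZMod N → M) :
    ∑ n ∈ (Icc 1 N).filter (fun n => n.gcd N = 1), f n = ∑ u : (ZMod N)ˣ, f u := by
  rw [← sum_range_filter_coprime_eq_sum_units, sum_filter, sum_filter, sum_Icc_one_eq_sum_range]
  simp

lemma kloosterman_eq_kloostermanSum (a b : ℤ) :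
    kloosterman a b N = kloostermanSum (a : ZMod N) (b : ZMod N) := by
  simp_rw [kloostermanSum, ← ZMod.inv_coe_unit]
  rw [kloosterman, ← sum_range_filter_coprime_eq_sum_units
    (fun z : ZMod N => ψ ((a : ZMod N) * z + (b : ZMod N) * z⁻¹))]
  refine sum_congr rfl fun x _ => ?_
  rw [← mul_div_assoc, ← stdAddChar_coe]
  push_cast
  simp [ZMod.natCast_val]

lemma sum_sq_kloostermanSum_eq_sum_sum_ramanujanSum (a : ZMod N) :
    ∑ n : (ZMod N)ˣ, kloostermanSum a n ^ 2
      = ∑ x : (ZMod N)ˣ, ∑ y : (ZMod N)ˣ,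
          ψ (a * ((x : ZMod N) + (y : ZMod N)))
            * ramanujanSum N ((↑x⁻¹ : ZMod N) + (↑y⁻¹ : ZMod N)) := by
  simp_rw [kloostermanSum, sq, sum_mul_sum, ramanujanSum, mul_sum, ← AddChar.map_add_eq_mul]
  rw [sum_comm]
  refine sum_congr rfl fun x _ => ?_
  rw [sum_comm]
  refine sum_congr rfl fun y _ => sum_congr rfl fun n _ => ?_
  ring_nf

lemma sum_sq_kloostermanSum_eq_ramanujanMoment (m : (ZMod N)ˣ) :
    ∑ n : (ZMod N)ˣ, kloostermanSum (m : ZMod N) n ^ 2 = ramanujanMoment N := by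
  have hsubst (y : (ZMod N)ˣ) :
      ∑ x : (ZMod N)ˣ, ψ ((m : ZMod N) * ((x : ZMod N) + (y : ZMod N)))
          * ramanujanSum N ((↑x⁻¹ : ZMod N) + (↑y⁻¹ : ZMod N))
        = ∑ z : (ZMod N)ˣ, ψ ((y : ZMod N) * ((m : ZMod N) * (1 + (z : ZMod N))))
          * ramanujanSum N (1 + (z : ZMod N)) := by
    refine (Fintype.sum_equiv (Equiv.mulRight y) _ _ fun z => ?_).symm
    have hinv : (↑(z * y)⁻¹ : ZMod N) + (↑y⁻¹ : ZMod N)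
        = (↑(z * y)⁻¹ : ZMod N) * (1 + (z : ZMod N)) := by
      rw [mul_add, mul_one, ← Units.val_mul, show (z * y)⁻¹ * z = y⁻¹ by group]
    rw [Equiv.coe_mulRight, hinv, ramanujanSum_units_mul, Units.val_mul]
    ring_nf
  rw [sum_sq_kloostermanSum_eq_sum_sum_ramanujanSum, sum_comm,
    sum_congr rfl fun y _ => hsubst y, sum_comm, ramanujanMoment]
  refine sum_congr rfl fun z _ => ?_
  rw [← sum_mul, ← ramanujanSum, ramanujanSum_units_mul, sq]

end Kloosterman

lemma sq_prod_le_two_pow_mul_prod {s : Finset ℕ} (hs : ∀ p ∈ s, p.Prime) :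
    ((∏ p ∈ s, p : ℕ) : ℝ) ^ 2 ≤ 2 ^ (#s + 1) * ∏ p ∈ s, ((p : ℝ) ^ 2 - p - 1) := by
  have hpos (p : ℕ) (hp : p ∈ s) : 0 < (p : ℝ) ^ 2 - p - 1 := by
    have : (2 : ℝ) ≤ p := by exact_mod_cast (hs p hp).two_le
    nlinarith
  have hle (p : ℕ) (hp : p ∈ s) :
      (p : ℝ) ^ 2 ≤ 2 * ((p : ℝ) ^ 2 - p - 1) * if p = 2 then 2 else 1 := by
    split_ifs with h2
    · subst h2; norm_num
    · have : (3 : ℝ) ≤ p := by exact_mod_cast (hs p hp).two_le.lt_of_ne' h2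
      nlinarith
  calc ((∏ p ∈ s, p : ℕ) : ℝ) ^ 2 = ∏ p ∈ s, (p : ℝ) ^ 2 := by push_cast; rw [prod_pow]
    _ ≤ ∏ p ∈ s, (2 * ((p : ℝ) ^ 2 - p - 1) * if p = 2 then 2 else 1) :=
      prod_le_prod (fun p _ => by positivity) hle
    _ = 2 ^ #s * (∏ p ∈ s, ((p : ℝ) ^ 2 - p - 1)) * if 2 ∈ s then 2 else 1 := by
      rw [prod_mul_distrib, prod_mul_distrib, prod_const, prod_ite_eq']
    _ ≤ 2 ^ (#s + 1) * ∏ p ∈ s, ((p : ℝ) ^ 2 - p - 1) := by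
      rw [pow_succ, mul_right_comm]
      gcongr
      · exact (prod_pos hpos).le
      · split_ifs <;> norm_num

/-- Lower bound for the second moment of Kloosterman sums modulo a square-free `N`:
`∑_{1 ≤ n ≤ N, gcd(n,N)=1} K(m,n,N)² ≥ N² / 2^{ω(N)+1}` (the sums `K(m,n,N)` being real). -/
theorem kloosterman_second_moment_lower (N : ℕ) (hN : 0 < N) (hsf : Squarefree N)
    (m : ℤ) (hmN : Int.gcd m (N : ℤ) = 1) :
    (N : ℝ) ^ 2 / 2 ^ (N.primeFactors.card + 1) ≤
      (∑ n ∈ (Finset.Icc 1 N).filter (fun n => Nat.gcd n N = 1),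
        (kloosterman m (n : ℤ) N) ^ 2).re := by
  have : NeZero N := ⟨hN.ne'⟩
  have hmoment : ∑ n ∈ (Icc 1 N).filter (fun n => n.gcd N = 1), kloosterman m n N ^ 2
      = ramanujanMoment N := by
    simp_rw [kloosterman_eq_kloostermanSum, Int.cast_natCast]
    rw [sum_Icc_filter_coprime_eq_sum_units (fun b => kloostermanSum (m : ZMod N) b ^ 2)]
    exact sum_sq_kloostermanSum_eq_ramanujanMoment
      (ZMod.unitOfIsCoprime m (Int.isCoprime_iff_gcd_eq_one.mpr hmN))
  have hreal : ∏ p ∈ N.primeFactors, ((p : ℂ) ^ 2 - p - 1)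
      = ((∏ p ∈ N.primeFactors, ((p : ℝ) ^ 2 - p - 1) : ℝ) : ℂ) := by
    push_cast; rfl
  rw [hmoment, ramanujanMoment_of_squarefree hsf, hreal, Complex.ofReal_re,
    div_le_iff₀ (by positivity), mul_comm]
  have := sq_prod_le_two_pow_mul_prod fun _ => Nat.prime_of_mem_primeFactors (n := N)
  rwa [Nat.prod_primeFactors_of_squarefree hsf] at this
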